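/- Let I and J be finite sets, c : I → ℕ with c(i) ≥ 1, q : J → ℕ with q(j) ≥ 1, and δ : I × J → ℝ injective. Call M' : I × J → {0,1} feasible if ∑_j M'(i,j) ≤ c(i) for all i and ∑_i M'(i,j) ≤ q(j) for all j, and pairwise stable if there is no pair (i,j) with M'(i,j) = 0 such that both (a) ∑_k M'(i,k) < c(i) or some k has M'(i,k) = 1 and δ(i,k) < δ(i,j), and (b) ∑_l M'(l,j) < q(j) or some l has M'(l,j) = 1 and δ(l,j) < δ(i,j). Then every feasible pairwise stable matching M' equals the greedy matching M obtained by processing pairs in strictly decreasing order of δ and matching a pair exactly when both sides have residual capacity. -/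

import Mathlib

/-!
Let `p` be the pair with the largest dating rate on which `M'` and the greedy matching `M`
disagree. When the greedy algorithm reaches `p`, its current matching is `M` restricted to the
pairs of larger rate, which is also `M'` restricted to them. Feasibility and pairwise stability
of `M'` say exactly that `M'` follows the greedy rule against this restriction: a pair of `M'`
leaves room on both sides above it, and an unmatched pair with room on both sides above it would
block `M'`. So both matchings decide `p` alike, a contradiction.
-/

open Finset

section LocalUpdate

variable {α β : Type*} {g : (α → β) → α → α → β}

theorem List.foldl_apply_of_notMem (hg : ∀ A p x, x ≠ p → g A p x = A x)
    {t : List α} {x : α} (hx : x ∉ t) (A : α → β) : t.foldl g A x = A x := by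
  induction t generalizing A with
  | nil => rfl
  | cons a t ih =>
    rw [List.mem_cons, not_or] at hx
    rw [List.foldl_cons, ih hx.2, hg A a x hx.1]

theorem List.foldl_append_apply_of_notMem (hg : ∀ A p x, x ≠ p → g A p x = A x)
    {t₁ t₂ : List α} {x : α} (hx : x ∉ t₂) (A : α → β) :
    (t₁ ++ t₂).foldl g A x = t₁.foldl g A x := by
  rw [List.foldl_append, List.foldl_apply_of_notMem hg hx]

/-- The state of a fold of local updates when it reaches `p`: earlier keys carry their final
values, all other keys their initial ones. -/
theorem List.foldl_apply_eq_of_pairwise (hg : ∀ A p x, x ≠ p → g A p x = A x)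
    [DecidableEq α] {γ : Type*} [Preorder γ] [DecidableLT γ] {δ : α → γ} {l : List α}
    (hl : l.Pairwise fun a b => δ b < δ a)
    {p : α} (hp : p ∈ l) (A : α → β) :
    l.foldl g A p =
      g (fun x => if x ∈ l ∧ δ p < δ x then l.foldl g A x else A x) p p := by
  obtain ⟨t₁, t₂, rfl⟩ := List.append_of_mem hp
  have hnd : (t₁ ++ p :: t₂).Nodup := hl.imp fun h he => (he ▸ h).false
  have hpt₂ : p ∉ t₂ := (List.nodup_cons.mp (List.nodup_append.mp hnd).2.1).1
  have hpre : ∀ x, x ∈ t₁ ++ p :: t₂ ∧ δ p < δ x ↔ x ∈ t₁ := by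
    rw [List.pairwise_append, List.pairwise_cons] at hl
    refine fun x => ⟨fun ⟨hx, hpx⟩ => ?_,
      fun hx => ⟨by simp [hx], hl.2.2 x hx p (by simp)⟩⟩
    rcases List.mem_append.mp hx with hx | hx | ⟨_, hx⟩
    · exact hx
    · exact (lt_irrefl _ hpx).elim
    · exact ((hl.2.1.1 x hx).asymm hpx).elim
  have hstate : t₁.foldl g A =
      fun x => if x ∈ t₁ ++ p :: t₂ ∧ δ p < δ x
        then (t₁ ++ p :: t₂).foldl g A x else A x := by
    funext x
    simp only [hpre]
    split_ifs with hx
    · have hxt₂ : x ∉ p :: t₂ := fun h => List.disjoint_of_nodup_append hnd hx h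
      exact (List.foldl_append_apply_of_notMem hg hxt₂ A).symm
    · exact List.foldl_apply_of_notMem hg hx A
  rw [← hstate, List.foldl_append, List.foldl_cons, List.foldl_apply_of_notMem hg hpt₂]

end LocalUpdate

section Counting

variable {κ γ : Type*} [Fintype κ] [LinearOrder γ] {f : κ → ℕ} {w : κ → γ}

theorem sum_ite_lt_sum_of_eq_one {k₀ : κ} (hk₀ : f k₀ = 1) :
    ∑ k, (if w k₀ < w k then f k else 0) < ∑ k, f k :=
  sum_lt_sum (fun k _ => by split_ifs <;> simp)
    ⟨k₀, mem_univ _, by simp [hk₀]⟩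

theorem sum_lt_or_exists_lt_of_sum_ite_lt {t : γ} {n : ℕ} (hf : ∀ k, f k = 0 ∨ f k = 1)
    (ht : ∀ k, w k = t → f k = 0) (h : ∑ k, (if t < w k then f k else 0) < n) :
    ∑ k, f k < n ∨ ∃ k, f k = 1 ∧ w k < t := by
  refine or_iff_not_imp_left.mpr fun hn => ?_
  obtain ⟨k, -, hk⟩ := exists_lt_of_sum_lt (h.trans_le (not_lt.mp hn))
  have hk1 : f k = 1 := (hf k).resolve_left fun h0 => by simp [h0] at hk
  have hwk : ¬ t < w k := fun hlt => by simp [hlt] at hk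
  exact ⟨k, hk1, (not_lt.mp hwk).lt_of_ne fun he => by simp [ht k he] at hk1⟩

end Counting

def restrictAbove {α γ : Type*} [LinearOrder γ] (δ : α → γ) (p : α) (M : α → ℕ) :
    α → ℕ :=
  fun x => if δ p < δ x then M x else 0

section Matching

variable {I J γ : Type*} [Fintype I] [Fintype J] [LinearOrder γ]
  (c : I → ℕ) (q : J → ℕ)

def HasRoom (A : I × J → ℕ) (p : I × J) : Prop :=
  (∑ k, A (p.1, k)) < c p.1 ∧ (∑ m, A (m, p.2)) < q p.2

instance (A : I × J → ℕ) (p : I × J) : Decidable (HasRoom c q A p) :=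
  inferInstanceAs (Decidable (_ ∧ _))

def IsFeasible (M : I × J → ℕ) : Prop :=
  (∀ i, ∑ j, M (i, j) ≤ c i) ∧ (∀ j, ∑ i, M (i, j) ≤ q j)

def IsPairwiseStable (δ : I × J → γ) (M : I × J → ℕ) : Prop :=
  ¬ ∃ (i : I) (j : J), M (i, j) = 0 ∧
    ((∑ k, M (i, k)) < c i ∨ ∃ k : J, M (i, k) = 1 ∧ δ (i, k) < δ (i, j)) ∧
    ((∑ m, M (m, j)) < q j ∨ ∃ m : I, M (m, j) = 1 ∧ δ (m, j) < δ (i, j))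

theorem IsPairwiseStable.apply_eq {δ : I × J → γ} (hδ : Function.Injective δ)
    {M : I × J → ℕ} (h01 : ∀ p, M p = 0 ∨ M p = 1) (hfeas : IsFeasible c q M)
    (hstable : IsPairwiseStable c q δ M) (p : I × J) :
    M p = if HasRoom c q (restrictAbove δ p M) p then 1 else 0 := by
  obtain ⟨i, j⟩ := p
  rcases h01 (i, j) with h0 | h1
  · rw [h0, eq_comm, ite_eq_right_iff]
    rintro ⟨hrow, hcol⟩
    refine (hstable ⟨i, j, h0, ?_, ?_⟩).elim
    · exact sum_lt_or_exists_lt_of_sum_ite_lt (w := fun k => δ (i, k)) (fun k => h01 (i, k))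
        (fun k hk => hδ hk ▸ h0) hrow
    · exact sum_lt_or_exists_lt_of_sum_ite_lt (w := fun m => δ (m, j)) (fun m => h01 (m, j))
        (fun m hm => hδ hm ▸ h0) hcol
  · rw [h1, if_pos]
    exact ⟨(sum_ite_lt_sum_of_eq_one (w := fun k => δ (i, k)) h1).trans_le (hfeas.1 i),
      (sum_ite_lt_sum_of_eq_one (w := fun m => δ (m, j)) h1).trans_le (hfeas.2 j)⟩

variable [DecidableEq I] [DecidableEq J]

def greedyStep (A : I × J → ℕ) (p : I × J) : I × J → ℕ :=
  if HasRoom c q A p then Function.update A p 1 else A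

theorem greedyStep_apply_of_ne {A : I × J → ℕ} {p x : I × J} (hx : x ≠ p) :
    greedyStep c q A p x = A x := by
  unfold greedyStep
  split_ifs
  · exact Function.update_of_ne hx _ _
  · rfl

theorem foldl_greedyStep_apply {δ : I × J → γ} {l : List (I × J)} (hl : ∀ p, p ∈ l)
    (hsort : l.Pairwise fun p p' => δ p' < δ p) {M : I × J → ℕ}
    (hM : M = l.foldl (greedyStep c q) 0) (p : I × J) :
    M p = if HasRoom c q (restrictAbove δ p M) p then 1 else 0 := by
  subst hM
  have hstate := List.foldl_apply_eq_of_pairwise (fun A p x => greedyStep_apply_of_ne c q)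
    hsort (hl p) 0
  simp only [hl, true_and] at hstate
  change _ = greedyStep c q (restrictAbove δ p _) p p at hstate
  rw [hstate, greedyStep]
  split_ifs <;> simp [restrictAbove]

end Matching

theorem stmt8_general {I J : Type*} [Fintype I] [Fintype J] [DecidableEq I] [DecidableEq J]
    (c : I → ℕ) (q : J → ℕ)
    (δ : I × J → ℝ) (hδ : Function.Injective δ)
    (l : List (I × J)) (hl : ∀ p : I × J, p ∈ l)
    (hsort : l.Pairwise (fun p p' => δ p' < δ p))
    (M : I × J → ℕ)
    (hM : M = l.foldl (fun A p =>
        if (∑ k, A (p.1, k)) < c p.1 ∧ (∑ m, A (m, p.2)) < q p.2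
        then Function.update A p 1 else A) (fun _ => 0))
    (M' : I × J → ℕ)
    (hM'01 : ∀ p : I × J, M' p = 0 ∨ M' p = 1)
    (hfeas : (∀ i, ∑ j, M' (i, j) ≤ c i) ∧ (∀ j, ∑ i, M' (i, j) ≤ q j))
    (hstable : ¬ ∃ (i : I) (j : J), M' (i, j) = 0 ∧
      ((∑ k, M' (i, k)) < c i ∨ ∃ k : J, M' (i, k) = 1 ∧ δ (i, k) < δ (i, j)) ∧
      ((∑ m, M' (m, j)) < q j ∨ ∃ m : I, M' (m, j) = 1 ∧ δ (m, j) < δ (i, j))) :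
    M' = M := by
  change M = l.foldl (greedyStep c q) 0 at hM
  by_contra hne
  obtain ⟨p, hp, hmax⟩ := exists_max_image (univ.filter fun x => M' x ≠ M x) δ
    (by simpa [Finset.Nonempty, Function.ne_iff] using hne)
  have hagree : restrictAbove δ p M' = restrictAbove δ p M := by
    funext x
    unfold restrictAbove
    split_ifs with hx
    · by_contra h
      exact (hmax x (by simpa using h)).not_gt hx
    · rfl
  have hM'p := IsPairwiseStable.apply_eq c q hδ hM'01 hfeas hstable p
  rw [hagree, ← foldl_greedyStep_apply c q hl hsort hM p] at hM'p
  exact (mem_filter.mp hp).2 hM'p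

/-- With injective dating rates `δ` and capacities `c`, `q`, every feasible, pairwise stable
0–1 matching `M'` coincides with the greedy matching `M` obtained by processing pairs in
strictly decreasing order of `δ` and matching a pair exactly when both sides have residual
capacity. -/
theorem stmt8 {I J : Type*} [Fintype I] [Fintype J] [DecidableEq I] [DecidableEq J]
    (c : I → ℕ) (hc : ∀ i, 1 ≤ c i) (q : J → ℕ) (hq : ∀ j, 1 ≤ q j)
    (δ : I × J → ℝ) (hδ : Function.Injective δ)
    (l : List (I × J)) (hl : ∀ p : I × J, p ∈ l)
    (hsort : l.Pairwise (fun p p' => δ p' < δ p))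
    (M : I × J → ℕ)
    (hM : M = l.foldl (fun A p =>
        if (∑ k, A (p.1, k)) < c p.1 ∧ (∑ m, A (m, p.2)) < q p.2
        then Function.update A p 1 else A) (fun _ => 0))
    (M' : I × J → ℕ)
    (hM'01 : ∀ p : I × J, M' p = 0 ∨ M' p = 1)
    (hfeas : (∀ i, ∑ j, M' (i, j) ≤ c i) ∧ (∀ j, ∑ i, M' (i, j) ≤ q j))
    (hstable : ¬ ∃ (i : I) (j : J), M' (i, j) = 0 ∧
      ((∑ k, M' (i, k)) < c i ∨ ∃ k : J, M' (i, k) = 1 ∧ δ (i, k) < δ (i, j)) ∧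
      ((∑ m, M' (m, j)) < q j ∨ ∃ m : I, M' (m, j) = 1 ∧ δ (m, j) < δ (i, j))) :
    M' = M :=
  stmt8_general c q δ hδ l hl hsort M hM M' hM'01 hfeas hstable
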